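/- Let 𝔊 be a unital C*-algebra, π : 𝔊 → B(H) a unital *-representation on a complex Hilbert space H, Ω ∈ H a cyclic unit vector for π, and ω(A) = ⟨Ω, π(A)Ω⟩ the associated state. Then π is irreducible, i.e., the commutant π(𝔊)′ consists only of the scalar multiples of the identity operator, if and only if ω is pure, i.e., every positive linear functional ρ on 𝔊 with ρ ≤ ω is of the form ρ = λω with 0 ≤ λ ≤ 1. -/

import Mathlib

open scoped ComplexOrder

variable {A H : Type*}
  [NormedRing A] [StarRing A] [CStarRing A] [NormedAlgebra ℂ A] [CompleteSpace A]
  [StarModule ℂ A]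
  [NormedAddCommGroup H] [InnerProductSpace ℂ H] [CompleteSpace H]

/-- The linear functional `a ↦ ⟨ξ, π(a) Ω⟩` associated with a representation `π`
and vectors `ξ, Ω`. -/
noncomputable def vectorFunctional (π : A →⋆ₐ[ℂ] (H →L[ℂ] H)) (ξ Ω : H) :
    A →ₗ[ℂ] ℂ where
  toFun a := (inner ℂ ξ (π a Ω) : ℂ)
  map_add' a b := by simp [map_add, ContinuousLinearMap.add_apply, inner_add_right]
  map_smul' c a := by simp [map_smul, ContinuousLinearMap.smul_apply, inner_smul_right]

/-!
A positive functional `ρ ≤ ω` satisfies the Cauchy–Schwarz bound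
`|ρ(a⋆ b)| ≤ ‖π(a)Ω‖ ‖π(b)Ω‖`, so by cyclicity of `Ω` it is represented as
`ρ(a⋆ b) = ⟨π(a)Ω, T π(b)Ω⟩` by a bounded operator `T`, which lies in the commutant `π(A)′`;
irreducibility makes `T`, hence `ρ`, a multiple of the identity (of `ω`).

Conversely, the commutant is a C⋆-algebra, so it is spanned by its elements `0 ≤ B ≤ 1`.
Such a `B` defines `ρ_B(a) = ⟨Ω, B π(a)Ω⟩` with `0 ≤ ρ_B ≤ ω`; purity gives `ρ_B = λ ω`,
and then `B = λ` by cyclicity.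
-/

open scoped InnerProductSpace

section DenseRange

variable {𝕜 E V : Type*} [RCLike 𝕜] [NormedAddCommGroup V] [InnerProductSpace 𝕜 V]

theorem ContinuousLinearMap.ext_of_denseRange_inner {L : E → V} (hL : DenseRange L)
    {X Y : V →L[𝕜] V} (h : ∀ a b, ⟪L a, X (L b)⟫_𝕜 = ⟪L a, Y (L b)⟫_𝕜) : X = Y := by
  have hXY (b : E) : X (L b) = Y (L b) := ext_inner_left 𝕜 fun v =>
    congrFun (hL.equalizer (g := fun v => ⟪v, X (L b)⟫_𝕜) (h := fun v => ⟪v, Y (L b)⟫_𝕜)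
      (by fun_prop) (by fun_prop) (funext fun a => h a b)) v
  exact ext fun x => congrFun (hL.equalizer X.continuous Y.continuous (funext hXY)) x

variable [AddCommGroup E] [Module 𝕜 E] [CompleteSpace V]

theorem exists_inner_map_eq_of_norm_le (L : E →ₗ[𝕜] V) (hL : DenseRange L)
    (s : E →ₗ⋆[𝕜] E →ₗ[𝕜] 𝕜) {C : ℝ} (hC : 0 ≤ C)
    (hs : ∀ a b, ‖s a b‖ ≤ C * ‖L a‖ * ‖L b‖) :
    ∃ T : V →L[𝕜] V, ∀ a b, ⟪L a, T (L b)⟫_𝕜 = s a b := by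
  have hext (a b : E) : (s a).extendOfNorm L (L b) = s a b :=
    LinearMap.extendOfNorm_eq hL ⟨_, hs a⟩ b
  let Φ : E →ₗ⋆[𝕜] V →L[𝕜] 𝕜 :=
    { toFun a := (s a).extendOfNorm L
      map_add' a a' := LinearMap.extendOfNorm_unique hL _ (hs (a + a')) _ <| by
        ext b; simp [hext]
      map_smul' c a := LinearMap.extendOfNorm_unique hL _ (hs (c • a)) _ <| by
        ext b; simp [hext] }
  have hΦ (a : E) : ‖Φ a‖ ≤ C * ‖L a‖ :=
    LinearMap.opNorm_extendOfNorm_le hL (by positivity) (hs a)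
  refine ⟨(InnerProductSpace.continuousLinearMapOfBilin (Φ.extendOfNorm L)).adjoint,
    fun a b => ?_⟩
  rw [ContinuousLinearMap.adjoint_inner_right, InnerProductSpace.continuousLinearMapOfBilin_apply,
    LinearMap.extendOfNorm_eq hL ⟨C, hΦ⟩]
  exact hext a b

end DenseRange

section PositiveFunctional

variable {E : Type*} [Ring E] [StarRing E] [Algebra ℂ E] [StarModule ℂ E]

def LinearMap.gnsForm (ρ : E →ₗ[ℂ] ℂ) : E →ₗ⋆[ℂ] E →ₗ[ℂ] ℂ :=
  LinearMap.mk₂'ₛₗ (starRingEnd ℂ) (RingHom.id ℂ) (fun a b => ρ (star a * b))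
    (fun a a' b => by simp [add_mul]) (fun c a b => by simp) (fun a b b' => by simp [mul_add])
    (fun c a b => by simp)

variable {ρ : E →ₗ[ℂ] ℂ}

theorem conj_apply_star_mul_of_nonneg (hρ : ∀ a, 0 ≤ ρ (star a * a)) (a b : E) :
    starRingEnd ℂ (ρ (star a * b)) = ρ (star b * a) := by
  -- polarization: `ρ (x⋆ x)` is real for `x = a + b` and `x = a + I • b`
  have h1 := (hρ (a + b)).isSelfAdjoint
  have h2 := (hρ (a + Complex.I • b)).isSelfAdjoint
  have ha := (hρ a).isSelfAdjoint
  have hb := (hρ b).isSelfAdjoint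
  simp only [IsSelfAdjoint, star_add, star_smul, add_mul, mul_add, smul_mul_assoc, mul_smul_comm,
    map_add, map_smul, smul_eq_mul, Complex.star_def, map_mul, map_neg, Complex.conj_I,
    neg_neg] at h1 h2 ha hb
  rw [ha, hb] at h1 h2
  have h2' : starRingEnd ℂ (ρ (star b * a)) - starRingEnd ℂ (ρ (star a * b)) =
      ρ (star a * b) - ρ (star b * a) :=
    mul_left_cancel₀ Complex.I_ne_zero (by linear_combination h2)
  linear_combination (h1 - h2') / 2

theorem norm_apply_star_mul_sq_le (hρ : ∀ a, 0 ≤ ρ (star a * a)) (a b : E) :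
    ‖ρ (star a * b)‖ ^ 2 ≤ (ρ (star a * a)).re * (ρ (star b * b)).re := by
  let core : PreInnerProductSpace.Core ℂ E :=
    { inner a b := ρ (star a * b)
      conj_inner_symm a b := conj_apply_star_mul_of_nonneg hρ b a
      re_inner_nonneg a := (Complex.nonneg_iff.1 (hρ a)).1
      add_left a a' b := by simp only [star_add, add_mul, map_add]
      smul_left a b c := by simp }
  have h : ‖ρ (star a * b)‖ * ‖ρ (star b * a)‖ ≤ (ρ (star a * a)).re * (ρ (star b * b)).re :=
    InnerProductSpace.Core.inner_mul_inner_self_le (c := core) a b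
  rwa [← conj_apply_star_mul_of_nonneg hρ a b, RCLike.norm_conj, ← sq] at h

theorem norm_apply_star_mul_sq_le_of_le {σ : E →ₗ[ℂ] ℂ} (hρ : ∀ a, 0 ≤ ρ (star a * a))
    (hle : ∀ a, 0 ≤ (σ - ρ) (star a * a)) (a b : E) :
    ‖ρ (star a * b)‖ ^ 2 ≤ (σ (star a * a)).re * (σ (star b * b)).re := by
  have hre (a : E) : (ρ (star a * a)).re ≤ (σ (star a * a)).re := by
    simpa using (Complex.nonneg_iff.1 (hle a)).1
  have hre_nonneg (a : E) : 0 ≤ (ρ (star a * a)).re := (Complex.nonneg_iff.1 (hρ a)).1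
  exact (norm_apply_star_mul_sq_le hρ a b).trans
    (mul_le_mul (hre a) (hre b) (hre_nonneg b) ((hre_nonneg a).trans (hre a)))

end PositiveFunctional

section StarSubalgebra

variable {𝔅 : Type*} [Ring 𝔅] [StarRing 𝔅] [Algebra ℂ 𝔅] [StarModule ℂ 𝔅]
  (S : StarSubalgebra ℂ 𝔅)

theorem StarSubalgebra.real_smul_mem (r : ℝ) {x : 𝔅} (hx : x ∈ S) : r • x ∈ S := by
  simpa using S.smul_mem hx (r : ℂ)

theorem StarSubalgebra.algebraMap_real_mem (r : ℝ) : algebraMap ℝ 𝔅 r ∈ S := by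
  rw [Algebra.algebraMap_eq_smul_one]
  exact S.real_smul_mem r S.one_mem

end StarSubalgebra

section CStarAlgebra

variable {𝔅 : Type*} [CStarAlgebra 𝔅] [PartialOrder 𝔅] [StarOrderedRing 𝔅]
  {S : StarSubalgebra ℂ 𝔅}

theorem StarSubalgebra.mem_bot_of_isSelfAdjoint
    (hS : ∀ b ∈ S, 0 ≤ b → b ≤ 1 → b ∈ (⊥ : StarSubalgebra ℂ 𝔅)) {y : 𝔅} (hyS : y ∈ S)
    (hy : IsSelfAdjoint y) : y ∈ (⊥ : StarSubalgebra ℂ 𝔅) := by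
  rcases eq_or_ne y 0 with rfl | hy0
  · exact zero_mem _
  set r : ℝ := ‖y‖
  have hr : 0 < 2 * r := by positivity
  set b : 𝔅 := (2 * r)⁻¹ • (y + algebraMap ℝ 𝔅 r)
  have hb0 : 0 ≤ b :=
    smul_nonneg (by positivity) (neg_le_iff_add_nonneg.1 hy.neg_algebraMap_norm_le_self)
  have hb1 : b ≤ 1 := by
    calc b ≤ (2 * r)⁻¹ • (algebraMap ℝ 𝔅 r + algebraMap ℝ 𝔅 r) :=
          smul_le_smul_of_nonneg_left (add_le_add_left hy.le_algebraMap_norm_self _)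
            (by positivity)
      _ = 1 := by
        rw [← map_add, ← two_mul, Algebra.smul_def, ← map_mul, inv_mul_cancel₀ hr.ne', map_one]
  have hyb : y = (2 * r) • b - algebraMap ℝ 𝔅 r := by
    rw [smul_smul, mul_inv_cancel₀ hr.ne', one_smul, add_sub_cancel_right]
  have hbS : b ∈ S := S.real_smul_mem _ (add_mem hyS (S.algebraMap_real_mem r))
  rw [hyb]
  exact sub_mem (StarSubalgebra.real_smul_mem _ _ (hS b hbS hb0 hb1))
    (StarSubalgebra.algebraMap_real_mem _ r)

theorem StarSubalgebra.eq_bot_of_forall_nonneg_le_one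
    (hS : ∀ b ∈ S, 0 ≤ b → b ≤ 1 → b ∈ (⊥ : StarSubalgebra ℂ 𝔅)) : S = ⊥ := by
  refine eq_bot_iff.2 fun x hx => ?_
  have hstar : star x ∈ S := star_mem hx
  rw [← realPart_add_I_smul_imaginaryPart x]
  refine add_mem (mem_bot_of_isSelfAdjoint hS ?_ (realPart x).2)
    (SMulMemClass.smul_mem _ (mem_bot_of_isSelfAdjoint hS ?_ (imaginaryPart x).2))
  · rw [realPart_apply_coe]
    exact S.real_smul_mem _ (add_mem hx hstar)
  · rw [imaginaryPart_apply_coe]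
    exact S.smul_mem (S.real_smul_mem _ (sub_mem hx hstar)) _

end CStarAlgebra

section Representation

variable {R V : Type*} [NormedRing R] [StarRing R] [NormedAlgebra ℂ R]
  [NormedAddCommGroup V] [InnerProductSpace ℂ V] [CompleteSpace V]
  (π : R →⋆ₐ[ℂ] (V →L[ℂ] V)) (Ω : V)

theorem StarAlgHom.mem_centralizer_range_iff {T : V →L[ℂ] V} :
    T ∈ StarSubalgebra.centralizer ℂ (Set.range π) ↔ ∀ a, T * π a = π a * T := by
  rw [StarSubalgebra.mem_centralizer_iff]
  refine ⟨fun h a => (h _ ⟨a, rfl⟩).1.symm, ?_⟩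
  rintro h _ ⟨a, rfl⟩
  rw [← map_star]
  exact ⟨(h a).symm, (h (star a)).symm⟩

theorem vectorFunctional_apply (ξ : V) (a : R) : vectorFunctional π ξ Ω a = ⟪ξ, π a Ω⟫_ℂ := rfl

theorem vectorFunctional_star_apply_star_mul {B : V →L[ℂ] V} (hB : ∀ a, B * π a = π a * B)
    (a b : R) : vectorFunctional π (star B Ω) Ω (star a * b) = ⟪π a Ω, B (π b Ω)⟫_ℂ := by
  rw [vectorFunctional_apply, ContinuousLinearMap.star_eq_adjoint,
    ContinuousLinearMap.adjoint_inner_left, map_mul, mul_apply_eq_comp, ← mul_apply_eq_comp B,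
    hB, mul_apply_eq_comp, map_star, ContinuousLinearMap.star_eq_adjoint,
    ContinuousLinearMap.adjoint_inner_right]

theorem vectorFunctional_apply_star_mul (a b : R) :
    vectorFunctional π Ω Ω (star a * b) = ⟪π a Ω, π b Ω⟫_ℂ := by
  simpa using vectorFunctional_star_apply_star_mul π Ω (B := 1) (fun a => by simp) a b

theorem vectorFunctional_apply_one (hΩ : ‖Ω‖ = 1) : vectorFunctional π Ω Ω 1 = 1 := by
  simp [vectorFunctional_apply, inner_self_eq_norm_sq_to_K, hΩ]

theorem exists_commute_inner_eq_of_le [StarModule ℂ R]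
    (hcyc : Dense (Set.range fun a : R => π a Ω)) {ρ : R →ₗ[ℂ] ℂ}
    (hρ : ∀ a, 0 ≤ ρ (star a * a)) (hle : ∀ a, 0 ≤ (vectorFunctional π Ω Ω - ρ) (star a * a)) :
    ∃ T : V →L[ℂ] V, (∀ c, T * π c = π c * T) ∧ ∀ a b, ⟪π a Ω, T (π b Ω)⟫_ℂ = ρ (star a * b) := by
  have hω (a : R) : (vectorFunctional π Ω Ω (star a * a)).re = ‖π a Ω‖ ^ 2 := by
    rw [vectorFunctional_apply_star_mul, inner_self_eq_norm_sq_to_K]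
    norm_cast
  have hbound (a b : R) : ‖ρ (star a * b)‖ ≤ 1 * ‖π a Ω‖ * ‖π b Ω‖ := by
    refine le_of_pow_le_pow_left₀ two_ne_zero (by positivity) ?_
    calc ‖ρ (star a * b)‖ ^ 2 ≤ ‖π a Ω‖ ^ 2 * ‖π b Ω‖ ^ 2 := by
          simpa only [hω] using norm_apply_star_mul_sq_le_of_le hρ hle a b
      _ = (1 * ‖π a Ω‖ * ‖π b Ω‖) ^ 2 := by ring
  obtain ⟨T, hT⟩ : ∃ T : V →L[ℂ] V, ∀ a b, ⟪π a Ω, T (π b Ω)⟫_ℂ = ρ (star a * b) :=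
    exists_inner_map_eq_of_norm_le ((ContinuousLinearMap.apply ℂ V Ω).toLinearMap ∘ₗ π.toLinearMap)
      hcyc ρ.gnsForm zero_le_one hbound
  refine ⟨T, fun c => ContinuousLinearMap.ext_of_denseRange_inner hcyc fun a b => ?_, hT⟩
  calc ⟪π a Ω, T (π c (π b Ω))⟫_ℂ = ρ (star a * (c * b)) := by
        rw [← hT, map_mul, mul_apply_eq_comp]
    _ = ρ (star (star c * a) * b) := by rw [star_mul, star_star, mul_assoc]
    _ = ⟪π a Ω, π c (T (π b Ω))⟫_ℂ := by
        rw [← hT, map_mul, mul_apply_eq_comp, map_star, ContinuousLinearMap.star_eq_adjoint,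
          ContinuousLinearMap.adjoint_inner_left]

theorem exists_eq_smul_one_of_nonneg_of_le_one (hcyc : Dense (Set.range fun a : R => π a Ω))
    (hpure : ∀ ρ : R →ₗ[ℂ] ℂ, (∀ a, 0 ≤ ρ (star a * a)) →
      (∀ a, 0 ≤ (vectorFunctional π Ω Ω - ρ) (star a * a)) →
      ∃ c : ℂ, ρ = c • vectorFunctional π Ω Ω)
    {B : V →L[ℂ] V} (hB : ∀ a, B * π a = π a * B) (h0 : 0 ≤ B) (h1 : B ≤ 1) :
    ∃ c : ℂ, B = c • 1 := by
  have hpos (P : V →L[ℂ] V) (hP : 0 ≤ P) (x : V) : 0 ≤ ⟪x, P x⟫_ℂ :=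
    ((ContinuousLinearMap.nonneg_iff_isPositive P).1 hP).inner_nonneg_right x
  have hρB := vectorFunctional_star_apply_star_mul π Ω hB
  obtain ⟨c, hc⟩ := hpure (vectorFunctional π (star B Ω) Ω)
    (fun a => hρB a a ▸ hpos B h0 _)
    (fun a => by
      rw [LinearMap.sub_apply, hρB, vectorFunctional_apply_star_mul, ← inner_sub_right]
      exact hpos (1 - B) (sub_nonneg.2 h1) _)
  refine ⟨c, ContinuousLinearMap.ext_of_denseRange_inner hcyc fun a b => ?_⟩
  have hab := congr($hc (star a * b))
  rw [hρB, LinearMap.smul_apply, vectorFunctional_apply_star_mul] at hab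
  simp [hab, inner_smul_right]

end Representation

/-- Let `Ω` be a cyclic unit vector for a unital `*`-representation `π`
of a unital C*-algebra on a Hilbert space, and let `ω(a) = ⟨Ω, π(a)Ω⟩` be the associated
state. Then `π` is irreducible (the commutant of `π(A)` consists of scalars) if and only
if `ω` is pure (every positive functional `ρ ≤ ω` equals `λ • ω` with `0 ≤ λ ≤ 1`). -/
theorem irreducible_iff_pure
    (π : A →⋆ₐ[ℂ] (H →L[ℂ] H)) (Ω : H) (hΩ : ‖Ω‖ = 1)
    (hcyc : Dense (Set.range fun a : A => π a Ω)) :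
    (∀ T : H →L[ℂ] H, (∀ a : A, T * π a = π a * T) →
        ∃ c : ℂ, T = c • (1 : H →L[ℂ] H)) ↔
      ∀ ρ : A →ₗ[ℂ] ℂ, (∀ a : A, 0 ≤ ρ (star a * a)) →
        (∀ a : A, 0 ≤ (vectorFunctional π Ω Ω - ρ) (star a * a)) →
        ∃ l : ℝ, 0 ≤ l ∧ l ≤ 1 ∧ ρ = (l : ℂ) • vectorFunctional π Ω Ω := by
  constructor
  · intro hirr ρ hρ hle
    obtain ⟨T, hTcomm, hT⟩ := exists_commute_inner_eq_of_le π Ω hcyc hρ hle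
    obtain ⟨c, rfl⟩ := hirr T hTcomm
    have hρc : ρ = c • vectorFunctional π Ω Ω := LinearMap.ext fun b => by
      simpa [vectorFunctional_apply, inner_smul_right] using (hT 1 b).symm
    have hc0 : 0 ≤ c := by simpa [hρc, vectorFunctional_apply_one π Ω hΩ] using hρ 1
    have hc1 : 0 ≤ 1 - c := by simpa [hρc, vectorFunctional_apply_one π Ω hΩ] using hle 1
    obtain ⟨l, hl0, rfl⟩ := RCLike.nonneg_iff_exists_ofReal.1 hc0
    exact ⟨l, hl0, Complex.real_le_real.1 (by simpa using hc1), hρc⟩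
  · intro hpure T hT
    have hbot : StarSubalgebra.centralizer ℂ (Set.range π) = ⊥ := by
      refine StarSubalgebra.eq_bot_of_forall_nonneg_le_one fun B hB h0 h1 => ?_
      obtain ⟨c, rfl⟩ := exists_eq_smul_one_of_nonneg_of_le_one π Ω hcyc
        (fun ρ hρ hle => let ⟨l, _, _, hl⟩ := hpure ρ hρ hle; ⟨l, hl⟩)
        (π.mem_centralizer_range_iff.1 hB) h0 h1
      exact StarSubalgebra.mem_bot.2 ⟨c, Algebra.algebraMap_eq_smul_one c⟩
    obtain ⟨c, hc⟩ := StarSubalgebra.mem_bot.1 (hbot ▸ π.mem_centralizer_range_iff.2 hT)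
    exact ⟨c, hc.symm.trans (Algebra.algebraMap_eq_smul_one c)⟩
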